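/- arXiv:2108.04062 — 3 statements merged into one kernel-verified Lean document; each statement's English description precedes it below -/
import Mathlib

section
/- Let g : ℝ^d → ℝ^m be 1-Lipschitz (with respect to the l₂ norms), W ∈ ℝ^{k×m}, b ∈ ℝ^k, and define f : ℝ^d → ℝ^k by f(x) = W g(x) + b. Fix x and a class l with f_l(x) > f_i(x) for all i ≠ l (where W_{i,:} ≠ W_{l,:} for i ≠ l). Then for every x* and every i ≠ l with f_l(x*) = f_i(x*), we have ‖x* − x‖₂ ≥ (f_l(x) − f_i(x)) / ‖W_{l,:} − W_{i,:}‖₂. Consequently the l₂ distance from x to the decision boundary is at least min_{i≠l} (f_l(x) − f_i(x)) / ‖W_{l,:} − W_{i,:}‖₂. -/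
/-!
The score gap `f · l - f · i` is `⟪W l - W i, g ·⟫` plus a constant. By Cauchy–Schwarz and the
Lipschitz bound on `g` it moves by at most `‖W l - W i‖ * ‖x' - x‖` between `x` and `x'`, and it
vanishes at `x'`.
-/

open RealInnerProductSpace

section LipschitzMargin

variable {X F : Type*} [PseudoMetricSpace X] [NormedAddCommGroup F] [InnerProductSpace ℝ F]
  {K : NNReal} {g : X → F}

theorem LipschitzWith.inner_sub_le (hg : LipschitzWith K g) (v : F) (x y : X) :
    ⟪v, g x⟫ - ⟪v, g y⟫ ≤ ‖v‖ * K * dist x y :=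
  calc ⟪v, g x⟫ - ⟪v, g y⟫ = ⟪v, g x - g y⟫ := (inner_sub_right v _ _).symm
    _ ≤ ‖v‖ * ‖g x - g y‖ := real_inner_le_norm v _
    _ ≤ ‖v‖ * (K * dist x y) := by
        gcongr
        rw [← dist_eq_norm]
        exact hg.dist_le_mul x y
    _ = ‖v‖ * K * dist x y := by ring

/-- For `K * ‖v‖ = 0` the left side is the junk value `0`. -/
theorem LipschitzWith.div_le_dist_of_inner_add_eq_zero (hg : LipschitzWith K g) (v : F) (c : ℝ)
    (x y : X) (hy : ⟪v, g y⟫ + c = 0) :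
    (⟪v, g x⟫ + c) / (K * ‖v‖) ≤ dist x y := by
  rcases (by positivity : (0 : ℝ) ≤ K * ‖v‖).eq_or_lt with hzero | hpos
  · rw [← hzero, div_zero]
    exact dist_nonneg
  · rw [div_le_iff₀ hpos]
    linarith [hg.inner_sub_le v x y]

end LipschitzMargin

theorem stmt0_general {d m k : ℕ}
    (g : EuclideanSpace ℝ (Fin d) → EuclideanSpace ℝ (Fin m))
    (hg : LipschitzWith 1 g)
    (W : Matrix (Fin k) (Fin m) ℝ) (b : Fin k → ℝ)
    (f : EuclideanSpace ℝ (Fin d) → Fin k → ℝ)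
    (hf : ∀ x i, f x i = (∑ j, W i j * g x j) + b i)
    (x : EuclideanSpace ℝ (Fin d)) (l : Fin k) :
    ∀ (x' : EuclideanSpace ℝ (Fin d)) (i : Fin k), i ≠ l → f x' l = f x' i →
      (f x l - f x i) / ‖(show EuclideanSpace ℝ (Fin m) from WithLp.toLp 2 (W l - W i))‖ ≤ ‖x' - x‖ := by
  intro x' i _ hx'
  set v : EuclideanSpace ℝ (Fin m) := WithLp.toLp 2 (W l - W i)
  have score_sub : ∀ y, f y l - f y i = ⟪v, g y⟫ + (b l - b i) := fun y => by
    simp only [hf, v, PiLp.inner_apply, RCLike.inner_apply, conj_trivial, Pi.sub_apply,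
      sub_mul, Finset.sum_sub_distrib, mul_comm (g y _)]
    ring
  have hbound := hg.div_le_dist_of_inner_add_eq_zero v (b l - b i) x x'
    (by rw [← score_sub, hx', sub_self])
  rwa [NNReal.coe_one, one_mul, ← score_sub, dist_comm, dist_eq_norm] at hbound

theorem stmt0 {d m k : ℕ}
    (g : EuclideanSpace ℝ (Fin d) → EuclideanSpace ℝ (Fin m))
    (hg : LipschitzWith 1 g)
    (W : Matrix (Fin k) (Fin m) ℝ) (b : Fin k → ℝ)
    (f : EuclideanSpace ℝ (Fin d) → Fin k → ℝ)
    (hf : ∀ x i, f x i = (∑ j, W i j * g x j) + b i)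
    (x : EuclideanSpace ℝ (Fin d)) (l : Fin k)
    (hl : ∀ i, i ≠ l → f x i < f x l)
    (hW : ∀ i, i ≠ l → W i ≠ W l) :
    ∀ (x' : EuclideanSpace ℝ (Fin d)) (i : Fin k), i ≠ l → f x' l = f x' i →
      (f x l - f x i) / ‖(show EuclideanSpace ℝ (Fin m) from WithLp.toLp 2 (W l - W i))‖ ≤ ‖x' - x‖ :=
  stmt0_general g hg W b f hf x l
end

section
/- Let v ∈ ℝ^m with ‖v‖₂ = 1. The Householder activation σ_v(z) = z for vᵀz > 0 and σ_v(z) = (I − 2vvᵀ)z for vᵀz ≤ 0 is 1-Lipschitz: ‖σ_v(z₁) − σ_v(z₂)‖₂ ≤ ‖z₁ − z₂‖₂ for all z₁, z₂ ∈ ℝ^m. -/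
/-!
On each side of the hyperplane `vᗮ` the activation is an isometry: the identity, or the
Householder reflection in `vᗮ`. For points on opposite sides, reflecting one of them changes
the squared distance by `4 ⟪v, z₁⟫ ⟪v, z₂⟫ ≤ 0`, so the distance can only shrink.
-/

open scoped RealInnerProductSpace

section Householder

variable {E : Type*} [NormedAddCommGroup E] [InnerProductSpace ℝ E] {v : E}

theorem reflection_orthogonalComplement_singleton_apply (hv : ‖v‖ = 1) (z : E) :
    (ℝ ∙ v)ᗮ.reflection z = z - (2 * ⟪v, z⟫) • v := by
  rw [Submodule.reflection_orthogonal_apply, Submodule.reflection_singleton_apply, hv]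
  simp only [RCLike.ofReal_real_eq_id, id, one_pow, div_one, neg_sub]
  rw [two_smul, ← add_smul, ← two_mul]

theorem norm_sub_reflection_sq (hv : ‖v‖ = 1) (z₁ z₂ : E) :
    ‖z₁ - (ℝ ∙ v)ᗮ.reflection z₂‖ ^ 2 = ‖z₁ - z₂‖ ^ 2 + 4 * ⟪v, z₁⟫ * ⟪v, z₂⟫ := by
  rw [reflection_orthogonalComplement_singleton_apply hv, sub_sub_eq_add_sub, add_sub_right_comm,
    norm_add_sq_real, norm_smul, hv, inner_smul_right, inner_sub_left, real_inner_comm z₁,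
    real_inner_comm z₂, mul_one, Real.norm_eq_abs, sq_abs]
  ring

theorem dist_reflection_le_of_mul_nonpos (hv : ‖v‖ = 1) {z₁ z₂ : E}
    (h : ⟪v, z₁⟫ * ⟪v, z₂⟫ ≤ 0) : dist z₁ ((ℝ ∙ v)ᗮ.reflection z₂) ≤ dist z₁ z₂ := by
  rw [dist_eq_norm, dist_eq_norm, ← sq_le_sq₀ (norm_nonneg _) (norm_nonneg _),
    norm_sub_reflection_sq hv]
  linarith

variable (v) in
noncomputable def householderActivation (z : E) : E :=
  if 0 < ⟪v, z⟫ then z else (ℝ ∙ v)ᗮ.reflection z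

theorem lipschitzWith_householderActivation (hv : ‖v‖ = 1) :
    LipschitzWith 1 (householderActivation v) := by
  refine LipschitzWith.of_dist_le_mul fun z₁ z₂ => ?_
  rw [NNReal.coe_one, one_mul]
  unfold householderActivation
  split_ifs with h₁ h₂ h₂
  · exact le_rfl
  · exact dist_reflection_le_of_mul_nonpos hv (mul_nonpos_of_nonneg_of_nonpos h₁.le (not_lt.1 h₂))
  · rw [dist_comm, dist_comm z₁]
    exact dist_reflection_le_of_mul_nonpos hv (mul_nonpos_of_nonneg_of_nonpos h₂.le (not_lt.1 h₁))
  · rw [LinearIsometryEquiv.dist_map]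

end Householder

theorem stmt3 {m : ℕ} (v : EuclideanSpace ℝ (Fin m)) (hv : ‖v‖ = 1)
    (σ : EuclideanSpace ℝ (Fin m) → EuclideanSpace ℝ (Fin m))
    (hσ : ∀ z, σ z = if 0 < ∑ j, v j * z j then z else z - (2 * ∑ j, v j * z j) • v) :
    LipschitzWith 1 σ := by
  have hinner (z : EuclideanSpace ℝ (Fin m)) : ∑ j, v j * z j = ⟪v, z⟫ := by
    simp [PiLp.inner_apply, mul_comm]
  have hσv : σ = householderActivation v := by
    ext1 z
    rw [hσ, hinner, householderActivation, reflection_orthogonalComplement_singleton_apply hv]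
  exact hσv ▸ lipschitzWith_householderActivation hv
end

section
/- Let S ⊂ ℝ^m be an open set, let Q₁ ≠ Q₂ be m×m orthogonal matrices, and let v ∈ ℝ^m with ‖v‖₂ = 1 be such that S intersects the hyperplane {z : vᵀz = 0}. Define g : S → ℝ^m by g(z) = Q₁z when vᵀz > 0 and g(z) = Q₂z when vᵀz ≤ 0. Then g is continuous on S if and only if Q₂ = Q₁(I − 2vvᵀ). -/
/-!
The two branches of `g` are continuous, so `g` is continuous exactly when they agree on the
hyperplane `v⊥`; as `S` is open and meets `v⊥`, agreement on `S ∩ v⊥` already forces agreement on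
all of `v⊥`. Then `R = Q₁ᵀ Q₂` is an orthogonal matrix fixing `v⊥` pointwise, so `R v = ±v`:
`R v = v` gives `R = 1`, excluded by `Q₁ ≠ Q₂`, and `R v = -v` makes `R` the reflection
`1 - 2 v vᵀ`.
-/

open Matrix Set Filter Topology

section Reflection

variable {n K : Type*} [Fintype n]

theorem dotProduct_sub_dotProduct_smul_self [CommRing K] {v : n → K} (hv : v ⬝ᵥ v = 1)
    (z : n → K) : v ⬝ᵥ (z - (v ⬝ᵥ z) • v) = 0 := by
  rw [dotProduct_sub, dotProduct_smul, hv, smul_eq_mul, mul_one, sub_self]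

theorem mulVec_eq_add_of_fixes_orthogonal [CommRing K] {R : Matrix n n K} {v : n → K}
    (hv : v ⬝ᵥ v = 1) (hfix : ∀ w, v ⬝ᵥ w = 0 → R *ᵥ w = w) (z : n → K) :
    R *ᵥ z = z + (v ⬝ᵥ z) • (R *ᵥ v - v) := by
  have hz : z = (v ⬝ᵥ z) • v + (z - (v ⬝ᵥ z) • v) := by abel
  conv_lhs => rw [hz, mulVec_add, mulVec_smul, hfix _ (dotProduct_sub_dotProduct_smul_self hv z)]
  module

variable [DecidableEq n]

theorem dotProduct_mulVec_mulVec_of_transpose_mul_self [CommRing K] {R : Matrix n n K}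
    (hR : Rᵀ * R = 1) (x y : n → K) : R *ᵥ x ⬝ᵥ R *ᵥ y = x ⬝ᵥ y := by
  rw [dotProduct_mulVec, ← mulVec_transpose, mulVec_mulVec, hR, one_mulVec]

variable [Field K] [LinearOrder K] [IsStrictOrderedRing K]

theorem mulVec_eq_or_eq_neg_of_fixes_orthogonal {R : Matrix n n K} (hR : Rᵀ * R = 1)
    {v : n → K} (hv : v ⬝ᵥ v = 1) (hfix : ∀ w, v ⬝ᵥ w = 0 → R *ᵥ w = w) :
    R *ᵥ v = v ∨ R *ᵥ v = -v := by
  set c := v ⬝ᵥ R *ᵥ v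
  have hperp : v ⬝ᵥ (R *ᵥ v - c • v) = 0 := dotProduct_sub_dotProduct_smul_self hv _
  -- `R v` is orthogonal to `R (v⊥) = v⊥`, hence a multiple of `v`.
  have hRv : R *ᵥ v = c • v := by
    have h : R *ᵥ v ⬝ᵥ (R *ᵥ v - c • v) = 0 := by
      rw [← hfix _ hperp, dotProduct_mulVec_mulVec_of_transpose_mul_self hR, hperp]
    have : (R *ᵥ v - c • v) ⬝ᵥ (R *ᵥ v - c • v) = 0 := by
      rw [sub_dotProduct, h, smul_dotProduct, hperp, smul_zero, sub_zero]
    exact sub_eq_zero.mp (dotProduct_self_eq_zero.mp this)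
  have hc : c * c = 1 := by
    have := dotProduct_mulVec_mulVec_of_transpose_mul_self hR v v
    rwa [hRv, smul_dotProduct, dotProduct_smul, hv, smul_eq_mul, smul_eq_mul, mul_one] at this
  rcases mul_self_eq_one_iff.mp hc with h | h
  · exact .inl (by rw [hRv, h, one_smul])
  · exact .inr (by rw [hRv, h, neg_one_smul])

theorem eq_one_or_eq_reflection_of_fixes_orthogonal {R : Matrix n n K} (hR : Rᵀ * R = 1)
    {v : n → K} (hv : v ⬝ᵥ v = 1) (hfix : ∀ w, v ⬝ᵥ w = 0 → R *ᵥ w = w) :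
    R = 1 ∨ R = 1 - (2 : K) • vecMulVec v v := by
  have hR' := mulVec_eq_add_of_fixes_orthogonal hv hfix
  rcases mulVec_eq_or_eq_neg_of_fixes_orthogonal hR hv hfix with hRv | hRv
  · refine .inl (ext_of_mulVec_single fun i => ?_)
    rw [hR', hRv, sub_self, smul_zero, add_zero, one_mulVec]
  · refine .inr (ext_of_mulVec_single fun i => ?_)
    rw [hR', hRv, sub_mulVec, one_mulVec, smul_mulVec, vecMulVec_mulVec, op_smul_eq_smul]
    module

theorem mulVec_eqOn_orthogonal_iff_eq_mul_reflection {Q₁ Q₂ : Matrix n n K} (hQ₁ : Q₁ᵀ * Q₁ = 1)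
    (hQ₁' : Q₁ * Q₁ᵀ = 1) (hQ₂ : Q₂ᵀ * Q₂ = 1) (hne : Q₁ ≠ Q₂) {v : n → K} (hv : v ⬝ᵥ v = 1) :
    (∀ w, v ⬝ᵥ w = 0 → Q₁ *ᵥ w = Q₂ *ᵥ w) ↔ Q₂ = Q₁ * (1 - (2 : K) • vecMulVec v v) := by
  constructor
  · intro h
    have hQ₂eq : Q₂ = Q₁ * (Q₁ᵀ * Q₂) := by rw [← Matrix.mul_assoc, hQ₁', Matrix.one_mul]
    have hR : (Q₁ᵀ * Q₂)ᵀ * (Q₁ᵀ * Q₂) = 1 := by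
      rw [transpose_mul, transpose_transpose, Matrix.mul_assoc, ← Matrix.mul_assoc Q₁, hQ₁',
        Matrix.one_mul, hQ₂]
    have hfix : ∀ w, v ⬝ᵥ w = 0 → (Q₁ᵀ * Q₂) *ᵥ w = w := fun w hw => by
      rw [← mulVec_mulVec, ← h w hw, mulVec_mulVec, hQ₁, one_mulVec]
    rcases eq_one_or_eq_reflection_of_fixes_orthogonal hR hv hfix with h1 | hrefl
    · exact absurd (by rw [hQ₂eq, h1, Matrix.mul_one]) hne
    · rwa [hrefl] at hQ₂eq
  · rintro rfl w hw
    rw [← mulVec_mulVec, sub_mulVec, one_mulVec, smul_mulVec, vecMulVec_mulVec, hw]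
    simp

end Reflection

theorem continuous_ite_pos {X Y : Type*} [TopologicalSpace X] [TopologicalSpace Y] {ℓ : X → ℝ}
    (hℓ : Continuous ℓ) {f₁ f₂ : X → Y} (hf₁ : Continuous f₁) (hf₂ : Continuous f₂)
    (h : ∀ z, ℓ z = 0 → f₁ z = f₂ z) :
    Continuous fun z => if 0 < ℓ z then f₁ z else f₂ z :=
  hf₁.if (fun z hz => h z (frontier_lt_subset_eq continuous_const hℓ hz).symm) hf₂

section Hyperplane

variable {E F : Type*} [NormedAddCommGroup E] [NormedSpace ℝ E] [TopologicalSpace F]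

theorem mem_closure_inter_setOf_pos {S : Set E} (hS : IsOpen S) {z : E} (hz : z ∈ S)
    {ℓ : E →L[ℝ] ℝ} (hℓz : ℓ z = 0) {v : E} (hv : 0 < ℓ v) :
    z ∈ closure (S ∩ {y | 0 < ℓ y}) := by
  refine hS.inter_closure ⟨hz, mem_closure_of_tendsto (f := fun t : ℝ => z + t • v)
    (b := 𝓝[>] 0) ?_ ?_⟩
  · exact (Continuous.tendsto' (by fun_prop) _ _ (by simp)).mono_left nhdsWithin_le_nhds
  · filter_upwards [self_mem_nhdsWithin] with t (ht : 0 < t)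
    simpa [hℓz] using mul_pos ht hv

theorem eqOn_inter_setOf_eq_zero_of_continuousOn_ite [T2Space F] {S : Set E} (hS : IsOpen S)
    {ℓ : E →L[ℝ] ℝ} {v : E} (hv : 0 < ℓ v) {f₁ f₂ : E → F} (hf₁ : Continuous f₁)
    (hcont : ContinuousOn (fun z => if 0 < ℓ z then f₁ z else f₂ z) S) :
    EqOn f₁ f₂ (S ∩ {z | ℓ z = 0}) := by
  rintro z ⟨hz, hℓz : ℓ z = 0⟩
  have hcl := mem_closure_inter_setOf_pos hS hz hℓz hv
  have hpos : EqOn (fun z => if 0 < ℓ z then f₁ z else f₂ z) f₁ (S ∩ {y | 0 < ℓ y}) :=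
    fun y hy => if_pos hy.2
  have := hpos.of_subset_closure (hcont.mono (insert_subset hz inter_subset_left))
    hf₁.continuousOn (subset_insert _ _) (insert_subset hcl subset_closure) (mem_insert z _)
  simpa [hℓz] using this.symm

theorem LinearMap.eqOn_of_eqOn_isOpen_inter {𝕜 E F : Type*} [NontriviallyNormedField 𝕜]
    [NormedAddCommGroup E] [NormedSpace 𝕜 E] [AddCommGroup F] [Module 𝕜 F] {f₁ f₂ : E →ₗ[𝕜] F}
    {H : Submodule 𝕜 E} {S : Set E} (hS : IsOpen S) {z₀ : E} (hz₀ : z₀ ∈ S ∩ H)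
    (h : EqOn f₁ f₂ (S ∩ H)) : EqOn f₁ f₂ H := by
  intro w hw
  have hnear : ∀ᶠ t in 𝓝[≠] (0 : 𝕜), z₀ + t • w ∈ S :=
    (Continuous.tendsto' (by fun_prop) 0 z₀ (by simp)).mono_left nhdsWithin_le_nhds
      |>.eventually (hS.mem_nhds hz₀.1)
  obtain ⟨t, htS, ht : t ≠ 0⟩ := (hnear.and self_mem_nhdsWithin).exists
  have := h ⟨htS, H.add_mem hz₀.2 (H.smul_mem t hw)⟩
  rw [map_add, map_add, map_smul, map_smul, h hz₀, add_right_inj] at this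
  exact smul_right_injective F ht this

end Hyperplane

theorem stmt5_general {m : ℕ} (S : Set (EuclideanSpace ℝ (Fin m))) (hS : IsOpen S)
    (Q₁ Q₂ : Matrix (Fin m) (Fin m) ℝ)
    (hQ₁ : Q₁ᵀ * Q₁ = 1) (hQ₁' : Q₁ * Q₁ᵀ = 1)
    (hQ₂ : Q₂ᵀ * Q₂ = 1)
    (hne : Q₁ ≠ Q₂)
    (v : EuclideanSpace ℝ (Fin m)) (hv : ‖v‖ = 1)
    (hmeet : ∃ z ∈ S, ∑ j, v j * z j = 0)
    (g : EuclideanSpace ℝ (Fin m) → EuclideanSpace ℝ (Fin m))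
    (hg : ∀ z, g z = if 0 < ∑ j, v j * z j
        then (show EuclideanSpace ℝ (Fin m) from WithLp.toLp 2 (Q₁.mulVec z))
        else (show EuclideanSpace ℝ (Fin m) from WithLp.toLp 2 (Q₂.mulVec z))) :
    ContinuousOn g S ↔
      Q₂ = Q₁ * (1 - (2:ℝ) • Matrix.vecMulVec (fun j => v j) (fun j => v j)) := by
  set ℓ := innerSL ℝ v
  have hℓ (z : EuclideanSpace ℝ (Fin m)) : ∑ j, v j * z j = ℓ z := by
    simp [ℓ, EuclideanSpace.inner_eq_star_dotProduct, dotProduct, mul_comm]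
  have hℓv : ℓ v = 1 := by simp [ℓ, hv]
  have hg' : g = fun z => if 0 < ℓ z then toLpLin 2 2 Q₁ z else toLpLin 2 2 Q₂ z :=
    funext fun z => by rw [hg, hℓ]; rfl
  rw [← mulVec_eqOn_orthogonal_iff_eq_mul_reflection hQ₁ hQ₁' hQ₂ hne ((hℓ v).trans hℓv), hg']
  constructor
  · intro hcont w hw
    obtain ⟨z₀, hz₀S, hz₀⟩ := hmeet
    have hagree := LinearMap.eqOn_of_eqOn_isOpen_inter (H := LinearMap.ker ℓ.toLinearMap) hS
      ⟨hz₀S, (hℓ z₀).symm.trans hz₀⟩ (eqOn_inter_setOf_eq_zero_of_continuousOn_ite hS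
        (hℓv ▸ one_pos) (LinearMap.continuous_of_finiteDimensional _) hcont)
    exact congrArg WithLp.ofLp (hagree ((hℓ (WithLp.toLp 2 w)).symm.trans hw))
  · intro h
    refine (continuous_ite_pos ℓ.continuous (LinearMap.continuous_of_finiteDimensional _)
      (LinearMap.continuous_of_finiteDimensional _) fun z hz => ?_).continuousOn
    exact congrArg (WithLp.toLp 2) (h _ ((hℓ z).trans hz))

theorem stmt5 {m : ℕ} (S : Set (EuclideanSpace ℝ (Fin m))) (hS : IsOpen S)
    (Q₁ Q₂ : Matrix (Fin m) (Fin m) ℝ)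
    (hQ₁ : Q₁ᵀ * Q₁ = 1) (hQ₁' : Q₁ * Q₁ᵀ = 1)
    (hQ₂ : Q₂ᵀ * Q₂ = 1) (hQ₂' : Q₂ * Q₂ᵀ = 1)
    (hne : Q₁ ≠ Q₂)
    (v : EuclideanSpace ℝ (Fin m)) (hv : ‖v‖ = 1)
    (hmeet : ∃ z ∈ S, ∑ j, v j * z j = 0)
    (g : EuclideanSpace ℝ (Fin m) → EuclideanSpace ℝ (Fin m))
    (hg : ∀ z, g z = if 0 < ∑ j, v j * z j
        then (show EuclideanSpace ℝ (Fin m) from WithLp.toLp 2 (Q₁.mulVec z))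
        else (show EuclideanSpace ℝ (Fin m) from WithLp.toLp 2 (Q₂.mulVec z))) :
    ContinuousOn g S ↔
      Q₂ = Q₁ * (1 - (2:ℝ) • Matrix.vecMulVec (fun j => v j) (fun j => v j)) :=
  stmt5_general S hS Q₁ Q₂ hQ₁ hQ₁' hQ₂ hne v hv hmeet g hg
end
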